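/- Let Σ be a simplicial complex and U ⊆ V(Σ) a subset of its vertices such that |Σ ∩ pow(U)| is contractible. Then the inclusion |Σ| ↪ |Σ ∪ pow(U)| is a homotopy equivalence. -/

import Mathlib

/-- The closed geometric simplex on the finite vertex set `σ`, inside `V → ℝ`. -/
def simplexSet {V : Type*} (σ : Finset V) : Set (V → ℝ) :=
  {f | (∀ v, v ∉ σ → f v = 0) ∧ (∀ v, 0 ≤ f v) ∧ ∑ v ∈ σ, f v = 1}

/-- The underlying set of the geometric realization of `K`. -/
def realizationSet {V : Type*} (K : Set (Finset V)) : Set (V → ℝ) :=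
  {f | ∃ σ ∈ K, f ∈ simplexSet σ}

/-- The geometric realization of the simplicial complex `K`. -/
def Realization {V : Type*} (K : Set (Finset V)) : Type _ := realizationSet K

/-- The geometric realization carries the weak topology: the final topology determined
by the family of closed simplices. -/
instance realizationTopology {V : Type*} (K : Set (Finset V)) :
    TopologicalSpace (Realization K) :=
  ⨆ σ : {σ : Finset V // σ ∈ K},
    TopologicalSpace.coinduced
      (fun f : simplexSet σ.1 => (⟨f.1, σ.1, σ.2, f.2⟩ : Realization K))
      inferInstance

lemma realization_mono {V : Type*} {K L : Set (Finset V)} (h : K ⊆ L) :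
    realizationSet K ⊆ realizationSet L := fun _ ⟨σ, hσ, hf⟩ => ⟨σ, h hσ, hf⟩

/-- The continuous inclusion of geometric realizations induced by an inclusion of
simplicial complexes. -/
noncomputable def inclusionMap {V : Type*} {K L : Set (Finset V)} (h : K ⊆ L) :
    C(Realization K, Realization L) where
  toFun := fun p => ⟨p.1, realization_mono h p.2⟩
  continuous_toFun := by
    refine continuous_iSup_dom.mpr fun σ => ?_
    refine continuous_coinduced_dom.mpr ?_
    refine continuous_iff_coinduced_le.mpr ?_
    exact le_iSup (fun τ : {σ : Finset V // σ ∈ L} =>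
      TopologicalSpace.coinduced
        (fun f : simplexSet τ.1 => (⟨f.1, τ.1, τ.2, f.2⟩ : Realization L))
        inferInstance) ⟨σ.1, h σ.2⟩

def IsComplex {V : Type*} (K : Set (Finset V)) : Prop :=
  (∀ σ ∈ K, σ.Nonempty) ∧ ∀ σ ∈ K, ∀ τ : Finset V, τ ⊆ σ → τ.Nonempty → τ ∈ K

/-- The vertex set of a simplicial complex. -/
def vertexSet {V : Type*} (K : Set (Finset V)) : Set V := {v | {v} ∈ K}

/-- The full simplex on the vertex set `U`: all finite nonempty subsets of `U`. -/
def fullComplex {V : Type*} (U : Set V) : Set (Finset V) :=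
  {s | s.Nonempty ∧ ↑s ⊆ U}

/-!
Since `|Σ ∩ pow(U)|` is contractible, its identity extends to a retraction
`r : |pow(U)| → |Σ ∩ pow(U)|`, built simplex by simplex in order of dimension: over a new
simplex, whose boundary is already mapped, cone off with a contraction, sending the
barycenter to the base point. Gluing `r` with the identity of `|Σ|` gives a retraction
`G : |Σ ∪ pow(U)| → |Σ|`. The straight segment from `G x` to `x` is constant for `x ∈ |Σ|`
and stays in a simplex of `pow(U)` for `x ∈ |pow(U)|`, so it is a homotopy from the
inclusion after `G` to the identity.
-/

noncomputable section

open Set Topology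

section Simplex

variable {V : Type*} {σ τ : Finset V} {x : V → ℝ}

theorem isClosed_simplexSet (σ : Finset V) : IsClosed (simplexSet σ) := by
  simp only [simplexSet, ofPred_and, ofPred_forall]
  exact (isClosed_iInter fun v => isClosed_iInter fun _ =>
    isClosed_eq (continuous_apply v) continuous_const).inter
    ((isClosed_iInter fun v => isClosed_le continuous_const (continuous_apply v)).inter
      (isClosed_eq (continuous_finsetSum _ fun v _ => continuous_apply v) continuous_const))

theorem mem_Icc_of_mem_simplexSet (hx : x ∈ simplexSet σ) (v : V) : x v ∈ Icc (0 : ℝ) 1 := by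
  refine ⟨hx.2.1 v, ?_⟩
  by_cases hv : v ∈ σ
  · exact hx.2.2 ▸ Finset.single_le_sum (fun w _ => hx.2.1 w) hv
  · exact (hx.1 v hv).trans_le zero_le_one

theorem isCompact_simplexSet (σ : Finset V) : IsCompact (simplexSet σ) :=
  (isCompact_univ_pi fun _ => isCompact_Icc).of_isClosed_subset (isClosed_simplexSet σ)
    fun _ hx v _ => mem_Icc_of_mem_simplexSet hx v

instance (σ : Finset V) : CompactSpace (simplexSet σ) :=
  isCompact_iff_compactSpace.mp (isCompact_simplexSet σ)

theorem simplexSet_mono (h : σ ⊆ τ) : simplexSet σ ⊆ simplexSet τ := fun _ hx =>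
  ⟨fun v hv => hx.1 v fun hvσ => hv (h hvσ), hx.2.1,
    hx.2.2 ▸ (Finset.sum_subset h fun v _ hvσ => hx.1 v hvσ).symm⟩

theorem convex_simplexSet (σ : Finset V) : Convex ℝ (simplexSet σ) := by
  intro x hx y hy a b ha hb hab
  refine ⟨fun v hv => ?_, fun v => ?_, ?_⟩
  · simp [hx.1 v hv, hy.1 v hv]
  · simpa using add_nonneg (mul_nonneg ha (hx.2.1 v)) (mul_nonneg hb (hy.2.1 v))
  · simp [Finset.sum_add_distrib, ← Finset.mul_sum, hx.2.2, hy.2.2, hab]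

theorem Finset.Nonempty.of_mem_simplexSet (hx : x ∈ simplexSet σ) : σ.Nonempty := by
  rw [Finset.nonempty_iff_ne_empty]
  rintro rfl
  simpa using hx.2.2

theorem mem_simplexSet_filter_ne_zero (hx : x ∈ simplexSet σ) :
    x ∈ simplexSet (σ.filter (x · ≠ 0)) :=
  ⟨fun v hv => by_contra fun h =>
      hv (Finset.mem_filter.2 ⟨by_contra fun hvσ => h (hx.1 v hvσ), h⟩),
    hx.2.1, by rw [Finset.sum_filter_ne_zero, hx.2.2]⟩

theorem mem_simplexSet_inter [DecidableEq V] (hσ : x ∈ simplexSet σ)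
    (hτ : x ∈ simplexSet τ) : x ∈ simplexSet (σ ∩ τ) :=
  simplexSet_mono (fun v hv => by
    have hv := (Finset.mem_filter.1 hv).2
    exact Finset.mem_inter.2
      ⟨by_contra fun h => hv (hσ.1 v h), by_contra fun h => hv (hτ.1 v h)⟩)
    (mem_simplexSet_filter_ne_zero hσ)

end Simplex

namespace Realization

variable {V : Type*} {M : Set (Finset V)}

def mk (x : V → ℝ) (hx : x ∈ realizationSet M) : Realization M := ⟨x, hx⟩

@[simp] theorem val_mk (x : V → ℝ) (hx : x ∈ realizationSet M) : (mk x hx).1 = x := rfl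

@[simp] theorem val_inclusionMap {L : Set (Finset V)} (h : M ⊆ L) (x : Realization M) :
    (inclusionMap h x).1 = x.1 := rfl

def ofSimplex (σ : Finset V) (hσ : σ ∈ M) (x : simplexSet σ) : Realization M :=
  mk x.1 ⟨σ, hσ, x.2⟩

theorem continuous_ofSimplex (σ : Finset V) (hσ : σ ∈ M) :
    Continuous (ofSimplex (M := M) σ hσ) :=
  continuous_iff_coinduced_le.mpr <|
    le_iSup (fun τ : {σ // σ ∈ M} =>
      TopologicalSpace.coinduced (ofSimplex (M := M) τ.1 τ.2) inferInstance) ⟨σ, hσ⟩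

theorem continuous_of_forall_simplex {T : Type*} [TopologicalSpace T] {f : Realization M → T}
    (h : ∀ σ (hσ : σ ∈ M), Continuous (f ∘ ofSimplex σ hσ)) : Continuous f :=
  continuous_iSup_dom.mpr fun σ => continuous_coinduced_dom.mpr (h σ.1 σ.2)

theorem continuous_val : Continuous fun x : Realization M => x.1 :=
  continuous_of_forall_simplex fun _ _ => continuous_subtype_val

/-- The weak topology commutes with products by a locally compact factor. -/
theorem continuous_prod_of_forall_simplex {P T : Type*} [TopologicalSpace P]
    [LocallyCompactSpace P] [TopologicalSpace T] {f : Realization M × P → T}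
    (h : ∀ σ (hσ : σ ∈ M),
      Continuous fun q : simplexSet σ × P => f (ofSimplex σ hσ q.1, q.2)) :
    Continuous f := by
  let f' : Realization M → C(P, T) := fun x =>
    ⟨fun p => f (x, p), by
      obtain ⟨σ, hσ, hx⟩ := x.2
      exact (h σ hσ).comp (continuous_const (y := (⟨x.1, hx⟩ : simplexSet σ)).prodMk
        continuous_id)⟩
  have hf' : Continuous f' := continuous_of_forall_simplex fun σ hσ =>
    (ContinuousMap.curry ⟨_, h σ hσ⟩).continuous
  exact ContinuousMap.continuous_uncurry_of_continuous ⟨f', hf'⟩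

theorem compactSpace_of_finite (hM : M.Finite) : CompactSpace (Realization M) := by
  have : Finite M := hM.to_subtype
  refine ⟨?_⟩
  have : (univ : Set (Realization M)) = ⋃ σ : M, range (ofSimplex σ.1 σ.2) := by
    refine (eq_univ_of_forall fun x => ?_).symm
    obtain ⟨σ, hσ, hx⟩ := x.2
    exact mem_iUnion.2 ⟨⟨σ, hσ⟩, ⟨x.1, hx⟩, rfl⟩
  exact this ▸ isCompact_iUnion fun σ => isCompact_range (continuous_ofSimplex σ.1 σ.2)

/-- On a finite complex the weak topology is the subspace topology of `V → ℝ`. -/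
theorem continuous_mk_of_finite (hM : M.Finite) {Z : Type*} [TopologicalSpace Z]
    {f : Z → V → ℝ} (hf : Continuous f) (hfM : ∀ z, f z ∈ realizationSet M) :
    Continuous fun z => mk (M := M) (f z) (hfM z) := by
  have := compactSpace_of_finite hM
  let e : Realization M ≃ realizationSet M := Equiv.refl _
  have he : Continuous e := continuous_val.subtype_mk _
  let e' := he.homeoOfEquivCompactToT2
  exact e'.symm.continuous.comp (hf.subtype_mk hfM)

end Realization

open Realization

section Radial

variable {V : Type*} {τ : Finset V} {x : V → ℝ}

def boundary (τ : Finset V) : Set (Finset V) := {ρ | ρ.Nonempty ∧ ρ ⊂ τ}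

theorem finite_boundary (τ : Finset V) : (boundary τ).Finite :=
  τ.powerset.finite_toSet.subset fun _ hρ => Finset.mem_powerset.2 hρ.2.subset

theorem mem_realizationSet_boundary_iff (hx : x ∈ simplexSet τ) :
    x ∈ realizationSet (boundary τ) ↔ ∃ v ∈ τ, x v = 0 := by
  constructor
  · rintro ⟨ρ, ⟨-, hρτ⟩, hxρ⟩
    obtain ⟨v, hvτ, hvρ⟩ := Finset.exists_of_ssubset hρτ
    exact ⟨v, hvτ, hxρ.1 v hvρ⟩
  · rintro ⟨v, hvτ, hv⟩
    have hx' := mem_simplexSet_filter_ne_zero hx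
    exact ⟨_, ⟨.of_mem_simplexSet hx', Finset.filter_ssubset.2 ⟨v, hvτ, not_not.2 hv⟩⟩,
      hx'⟩

/-- `1 - |τ| · min_τ x`: on the simplex `τ` it is `0` at the barycenter and `1` on the
boundary. -/
def radialCoord (τ : Finset V) (x : V → ℝ) : ℝ :=
  1 - τ.card * if h : τ.Nonempty then τ.inf' h x else 0

def barycenter (τ : Finset V) : V → ℝ := (τ : Set V).indicator fun _ => (τ.card : ℝ)⁻¹

/-- Central projection of `τ` from its barycenter onto its boundary. -/
def radialProj (τ : Finset V) (x : V → ℝ) : V → ℝ :=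
  barycenter τ + (radialCoord τ x)⁻¹ • (x - barycenter τ)

theorem continuous_radialCoord (τ : Finset V) : Continuous (radialCoord τ) := by
  unfold radialCoord
  split_ifs with h
  · exact continuous_const.sub
      (continuous_const.mul (Continuous.finset_inf'_apply h fun v _ => continuous_apply v))
  · exact continuous_const

theorem continuousOn_radialProj (τ : Finset V) :
    ContinuousOn (radialProj τ) {x | radialCoord τ x ≠ 0} :=
  continuousOn_const.add
    (((continuous_radialCoord τ).continuousOn.inv₀ fun _ h => h).smul
      (continuousOn_id.sub continuousOn_const))

theorem radialCoord_eq (hx : x ∈ simplexSet τ) :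
    radialCoord τ x = 1 - τ.card * τ.inf' (.of_mem_simplexSet hx) x := by
  rw [radialCoord, dif_pos]

theorem radialCoord_mem_Icc (hx : x ∈ simplexSet τ) : radialCoord τ x ∈ Icc 0 1 := by
  have hτ : τ.Nonempty := .of_mem_simplexSet hx
  have hmin : 0 ≤ τ.inf' hτ x := (Finset.le_inf'_iff hτ x).2 fun v _ => hx.2.1 v
  have hsum : τ.card • τ.inf' hτ x ≤ ∑ v ∈ τ, x v :=
    Finset.card_nsmul_le_sum τ x _ fun v hv => Finset.inf'_le x hv
  rw [hx.2.2, nsmul_eq_mul] at hsum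
  rw [radialCoord_eq hx]
  constructor <;> nlinarith

theorem radialCoord_eq_one_iff (hx : x ∈ simplexSet τ) :
    radialCoord τ x = 1 ↔ ∃ v ∈ τ, x v = 0 := by
  have hτ : τ.Nonempty := .of_mem_simplexSet hx
  have hcard : (τ.card : ℝ) ≠ 0 := by exact_mod_cast hτ.card_pos.ne'
  rw [radialCoord_eq hx, sub_eq_self, mul_eq_zero, or_iff_right hcard]
  constructor
  · intro h
    obtain ⟨v, hv, hxv⟩ := Finset.exists_mem_eq_inf' hτ x
    exact ⟨v, hv, hxv ▸ h⟩
  · rintro ⟨v, hv, hxv⟩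
    exact le_antisymm (hxv ▸ Finset.inf'_le x hv)
      ((Finset.le_inf'_iff hτ x).2 fun v _ => hx.2.1 v)

theorem radialProj_of_radialCoord_eq_one (h : radialCoord τ x = 1) : radialProj τ x = x := by
  simp [radialProj, h]

theorem radialProj_mem_boundary (hx : x ∈ simplexSet τ) (h : radialCoord τ x ≠ 0) :
    radialProj τ x ∈ realizationSet (boundary τ) := by
  have hτ : τ.Nonempty := .of_mem_simplexSet hx
  have hcard : (0 : ℝ) < τ.card := by exact_mod_cast hτ.card_pos
  have hr : 0 < radialCoord τ x := lt_of_le_of_ne (radialCoord_mem_Icc hx).1 (Ne.symm h)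
  have hmin : τ.inf' hτ x = (1 - radialCoord τ x) / τ.card := by
    rw [radialCoord_eq hx]; field_simp; ring
  have hout : ∀ v ∉ τ, radialProj τ x v = 0 := fun v hv => by
    simp [radialProj, barycenter, hv, hx.1 v hv]
  have hin : ∀ v ∈ τ, radialProj τ x v = (x v - τ.inf' hτ x) / radialCoord τ x := by
    intro v hv
    simp only [radialProj, barycenter, Finset.mem_coe, hv, indicator_of_mem, Pi.add_apply,
      Pi.smul_apply, Pi.sub_apply, smul_eq_mul, hmin]
    field_simp
    ring
  have hmem : radialProj τ x ∈ simplexSet τ := by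
    refine ⟨hout, fun v => ?_, ?_⟩
    · by_cases hv : v ∈ τ
      · rw [hin v hv]
        exact div_nonneg (sub_nonneg.2 (Finset.inf'_le x hv)) hr.le
      · exact (hout v hv).ge
    · rw [Finset.sum_congr rfl hin, ← Finset.sum_div, Finset.sum_sub_distrib, hx.2.2,
        Finset.sum_const, nsmul_eq_mul, hmin]
      field_simp
      ring
  obtain ⟨w, hw, hxw⟩ := Finset.exists_mem_eq_inf' hτ x
  exact (mem_realizationSet_boundary_iff hmem).2
    ⟨w, hw, by rw [hin w hw, hxw, sub_self, zero_div]⟩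

end Radial

theorem continuous_cone {Z Y T : Type*} [TopologicalSpace Z] [TopologicalSpace Y]
    [TopologicalSpace T] (J : C(unitInterval × Y, T)) {t₀ : T} (hJ : ∀ y, J (0, y) = t₀)
    {μ : Z → unitInterval} (hμ : Continuous μ) {G : Z → Y}
    (hG : ContinuousOn G {z | μ z ≠ 0}) {C : Set Y} (hC : IsCompact C)
    (hGC : MapsTo G {z | μ z ≠ 0} C) : Continuous fun z => J (μ z, G z) := by
  refine continuous_iff_continuousAt.2 fun z₀ => ?_
  by_cases hz₀ : μ z₀ = 0
  · rw [ContinuousAt, hz₀, hJ, tendsto_nhds]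
    intro O hO ht₀
    -- the tube lemma around `{0} × C`
    have hnear : ∀ᶠ s in 𝓝 (0 : unitInterval), ∀ y ∈ C, J (s, y) ∈ O :=
      hC.eventually_forall_of_forall_eventually fun y _ =>
        J.continuous.continuousAt.preimage_mem_nhds (hO.mem_nhds (by rwa [hJ]))
    filter_upwards [(hz₀ ▸ hμ.tendsto z₀).eventually hnear] with z hz
    by_cases h : μ z = 0
    · simpa only [mem_preimage, h, hJ]
    · exact hz _ (hGC h)
  · have hopen : IsOpen {z | μ z ≠ 0} := isOpen_ne_fun hμ continuous_const
    exact J.continuous.continuousAt.comp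
      (hμ.continuousAt.prodMk (hG.continuousAt (hopen.mem_nhds hz₀)))

section Extension

variable {V Y : Type*} [TopologicalSpace Y] {M M' : Set (Finset V)} {τ : Finset V}
  {x : V → ℝ}

theorem mem_realizationSet_iff_radialCoord_eq_one (hM : IsComplex M) (hτ : τ ∉ M)
    (hbd : boundary τ ⊆ M) (hx : x ∈ simplexSet τ) :
    x ∈ realizationSet M ↔ radialCoord τ x = 1 := by
  rw [radialCoord_eq_one_iff hx]
  constructor
  · rintro ⟨ρ, hρ, hxρ⟩
    by_contra! h
    exact hτ (hM.2 ρ hρ τ (fun v hv => by_contra fun hvρ => h v hv (hxρ.1 v hvρ))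
      (.of_mem_simplexSet hx))
  · exact fun h => realization_mono hbd ((mem_realizationSet_boundary_iff hx).2 h)

theorem eq_of_notMem_realizationSet (hM : IsComplex M)
    (hbd : ∀ τ ∈ M', τ ∉ M → boundary τ ⊆ M) {τ τ' : Finset V} (hτ : τ ∈ M')
    (hτ' : τ' ∈ M')
    (hx : x ∈ simplexSet τ) (hx' : x ∈ simplexSet τ') (hxM : x ∉ realizationSet M) :
    τ = τ' := by
  have hsub : ∀ ρ ρ', ρ ∈ M' → x ∈ simplexSet ρ → x ∈ simplexSet ρ' →
      ρ ⊆ ρ' := by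
    intro ρ ρ' hρ hxρ hxρ' v hv
    have hρM : ρ ∉ M := fun h => hxM ⟨ρ, h, hxρ⟩
    have hpos : ¬∃ v ∈ ρ, x v = 0 := by
      rwa [← radialCoord_eq_one_iff hxρ,
        ← mem_realizationSet_iff_radialCoord_eq_one hM hρM (hbd ρ hρ hρM) hxρ]
    exact by_contra fun h => hpos ⟨v, hv, hxρ'.1 v h⟩
  exact (hsub τ τ' hτ hx hx').antisymm (hsub τ' τ hτ' hx' hx)

variable {y₀ : Y} (f : C(Realization M, Y))
  (H : (ContinuousMap.const Y y₀).Homotopy (ContinuousMap.id Y))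

open Classical in
def extendByConst (x : V → ℝ) : Y := if h : x ∈ realizationSet M then f (mk x h) else y₀

/-- Over a simplex `τ` with boundary in `|M|`: the point at radial coordinate `r` above
`y ∈ ∂τ` goes to `H (r, f y)`, so the barycenter goes to the apex `y₀`. -/
def coneMap (τ : Finset V) (x : V → ℝ) : Y :=
  H (projIcc 0 1 zero_le_one (radialCoord τ x), extendByConst f (y₀ := y₀) (radialProj τ x))

open Classical in
/-- Off `|M|`, `x.2.choose` is the only simplex of `M'` containing `x`
(`eq_of_notMem_realizationSet`). -/
def coneExtension (M' : Set (Finset V)) (x : Realization M') : Y :=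
  if h : x.1 ∈ realizationSet M then f (mk x.1 h) else coneMap f H x.2.choose x.1

theorem extendByConst_of_mem (hx : x ∈ realizationSet M) :
    extendByConst f (y₀ := y₀) x = f (mk x hx) :=
  dif_pos hx

theorem coneMap_of_radialCoord_eq_one (h : radialCoord τ x = 1) (hx : x ∈ realizationSet M) :
    coneMap f H τ x = f (mk x hx) := by
  rw [coneMap, h, projIcc_right, radialProj_of_radialCoord_eq_one h, extendByConst_of_mem f hx]
  exact H.apply_one _

theorem coneExtension_of_mem (x : Realization M') (hx : x.1 ∈ realizationSet M) :
    coneExtension f H M' x = f (mk x.1 hx) :=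
  dif_pos hx

theorem coneExtension_of_notMem (x : Realization M') (hx : x.1 ∉ realizationSet M) :
    coneExtension f H M' x = coneMap f H x.2.choose x.1 :=
  dif_neg hx

theorem coneExtension_ofSimplex (hM : IsComplex M)
    (hbd : ∀ τ ∈ M', τ ∉ M → boundary τ ⊆ M)
    (hτ : τ ∈ M') (hτM : τ ∉ M) (x : simplexSet τ) :
    coneExtension f H M' (ofSimplex τ hτ x) = coneMap f H τ x := by
  by_cases hxM : x.1 ∈ realizationSet M
  · rw [coneExtension_of_mem f H (ofSimplex τ hτ x) hxM, coneMap_of_radialCoord_eq_one f H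
      ((mem_realizationSet_iff_radialCoord_eq_one hM hτM (hbd τ hτ hτM) x.2).1 hxM) hxM]
    rfl
  · have h := (ofSimplex (M := M') τ hτ x).2.choose_spec
    rw [coneExtension_of_notMem f H (ofSimplex τ hτ x) hxM,
      eq_of_notMem_realizationSet hM hbd h.1 hτ h.2 x.2 hxM]
    rfl

theorem continuous_coneMap (hbd : boundary τ ⊆ M) :
    Continuous fun x : simplexSet τ => coneMap f H τ x := by
  have := compactSpace_of_finite (finite_boundary τ)
  have hproj : ∀ x : simplexSet τ, projIcc 0 1 zero_le_one (radialCoord τ x) ≠ 0 →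
      radialProj τ x ∈ realizationSet (boundary τ) := fun x h =>
    radialProj_mem_boundary x.2 fun h0 => h (by rw [h0, projIcc_left]; rfl)
  refine continuous_cone H.toContinuousMap (fun y => H.apply_zero y)
    (continuous_projIcc.comp ((continuous_radialCoord τ).comp continuous_subtype_val))
    (C := range (f ∘ inclusionMap hbd)) ?_ (isCompact_range (by fun_prop)) fun x hx =>
      ⟨mk _ (hproj x hx), (extendByConst_of_mem f (realization_mono hbd (hproj x hx))).symm⟩
  rw [continuousOn_iff_continuous_domRestrict]
  have hproj' : Continuous fun x : {x : simplexSet τ | projIcc 0 1 zero_le_one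
      (radialCoord τ x) ≠ 0} => radialProj τ x.1 :=
    (continuousOn_radialProj τ).comp_continuous
      (continuous_subtype_val.comp continuous_subtype_val) fun x h0 =>
        x.2 (by rw [h0, projIcc_left]; rfl)
  exact ((f.continuous.comp (inclusionMap hbd).continuous).comp
    (continuous_mk_of_finite (finite_boundary τ) hproj' fun x => hproj x.1 x.2)).congr fun x =>
      (extendByConst_of_mem f (realization_mono hbd (hproj x.1 x.2))).symm

theorem exists_extension_of_boundary_subset [ContractibleSpace Y] (hM : IsComplex M)
    (hMM' : M ⊆ M') (hbd : ∀ τ ∈ M', τ ∉ M → boundary τ ⊆ M) :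
    ∃ g : C(Realization M', Y), ∀ x, g (inclusionMap hMM' x) = f x := by
  obtain ⟨y₀, ⟨H⟩⟩ := id_nullhomotopic Y
  refine ⟨⟨coneExtension f H.symm M', continuous_of_forall_simplex fun τ hτ => ?_⟩,
    fun x => coneExtension_of_mem f H.symm (inclusionMap hMM' x) x.2⟩
  by_cases hτM : τ ∈ M
  · exact (f.continuous.comp (continuous_ofSimplex τ hτM)).congr fun x =>
      (coneExtension_of_mem f H.symm (ofSimplex τ hτ x) ⟨τ, hτM, x.2⟩).symm
  · exact (continuous_coneMap f H.symm (hbd τ hτ hτM)).congr fun x =>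
      (coneExtension_ofSimplex f H.symm hM hbd hτ hτM x).symm

end Extension

section Skeleton

variable {V Y : Type*} [TopologicalSpace Y] {L M : Set (Finset V)}

def relSkeleton (L M : Set (Finset V)) (n : ℕ) : Set (Finset V) :=
  L ∪ {σ | σ ∈ M ∧ σ.card ≤ n}

theorem relSkeleton_mono : Monotone (relSkeleton L M) := fun _ _ hmn =>
  union_subset_union_right L fun _ hσ => ⟨hσ.1, hσ.2.trans hmn⟩

theorem relSkeleton_subset (hLM : L ⊆ M) (n : ℕ) : relSkeleton L M n ⊆ M :=
  union_subset hLM fun _ hσ => hσ.1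

theorem relSkeleton_zero_subset (hM : IsComplex M) : relSkeleton L M 0 ⊆ L :=
  union_subset subset_rfl fun σ hσ => absurd hσ.2 (hM.1 σ hσ.1).card_pos.not_ge

theorem isComplex_relSkeleton (hL : IsComplex L) (hM : IsComplex M) (n : ℕ) :
    IsComplex (relSkeleton L M n) := by
  refine ⟨fun σ hσ => hσ.elim (hL.1 σ) fun h => hM.1 σ h.1, ?_⟩
  rintro σ (hσ | hσ) τ hτσ hτ
  · exact Or.inl (hL.2 σ hσ τ hτσ hτ)
  · exact Or.inr ⟨hM.2 σ hσ.1 τ hτσ hτ, (Finset.card_le_card hτσ).trans hσ.2⟩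

theorem boundary_subset_relSkeleton (hM : IsComplex M) (n : ℕ) :
    ∀ τ ∈ relSkeleton L M (n + 1), τ ∉ relSkeleton L M n →
      boundary τ ⊆ relSkeleton L M n := by
  rintro τ (hτ | ⟨hτM, hτcard⟩) hτn ρ ⟨hρ, hρτ⟩
  · exact absurd (Or.inl hτ) hτn
  · have hcard : τ.card = n + 1 := by
      by_contra h
      exact hτn (Or.inr ⟨hτM, by omega⟩)
    have := Finset.card_lt_card hρτ
    exact Or.inr ⟨hM.2 τ hτM ρ hρτ.subset hρ, by omega⟩

theorem exists_extension_of_monotone (N : ℕ → Set (Finset V)) (hN : Monotone N)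
    (hNM : ∀ n, N n ⊆ M) (hcover : ∀ σ ∈ M, ∃ n, σ ∈ N n)
    (f : ∀ n, C(Realization (N n), Y))
    (hf : ∀ n x, f (n + 1) (inclusionMap (hN n.le_succ) x) = f n x) :
    ∃ g : C(Realization M, Y), ∀ n x, g (inclusionMap (hNM n) x) = f n x := by
  have hle : ∀ m n, m ≤ n →
      ∀ x (hm : x ∈ realizationSet (N m)) (hn : x ∈ realizationSet (N n)),
        f n (mk x hn) = f m (mk x hm) := by
    intro m n hmn
    induction n, hmn using Nat.le_induction with
    | base => exact fun _ _ _ => rfl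
    | succ n hmn ih =>
      exact fun x hm hn => (hf n (mk x _)).trans (ih x hm (realization_mono (hN hmn) hm))
  have hcompat : ∀ m n x (hm : x ∈ realizationSet (N m)) (hn : x ∈ realizationSet (N n)),
      f m (mk x hm) = f n (mk x hn) := fun m n x hm hn =>
    (le_total m n).elim (fun h => (hle m n h x hm hn).symm) fun h => hle n m h x hn hm
  have hpt : ∀ x : Realization M, ∃ n, x.1 ∈ realizationSet (N n) := fun x => by
    obtain ⟨σ, hσ, hx⟩ := x.2
    obtain ⟨n, hn⟩ := hcover σ hσ
    exact ⟨n, σ, hn, hx⟩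
  choose idx hidx using hpt
  refine ⟨⟨fun x => f (idx x) (mk x.1 (hidx x)),
    continuous_of_forall_simplex fun σ hσ => ?_⟩, fun n x => hcompat _ n _ _ x.2⟩
  obtain ⟨n, hn⟩ := hcover σ hσ
  exact ((f n).continuous.comp (continuous_ofSimplex σ hn)).congr fun x =>
    hcompat n _ _ ⟨σ, hn, x.2⟩ _

theorem exists_extension_of_contractible [ContractibleSpace Y] (hL : IsComplex L)
    (hM : IsComplex M) (hLM : L ⊆ M) (f : C(Realization L, Y)) :
    ∃ g : C(Realization M, Y), ∀ x, g (inclusionMap hLM x) = f x := by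
  choose ext hext using fun n (g : C(Realization (relSkeleton L M n), Y)) =>
    exists_extension_of_boundary_subset g (isComplex_relSkeleton hL hM n)
      (relSkeleton_mono n.le_succ) (boundary_subset_relSkeleton hM n)
  let F : ∀ n, C(Realization (relSkeleton L M n), Y) := fun n =>
    Nat.rec (f.comp (inclusionMap (relSkeleton_zero_subset hM))) (fun n g => ext n g) n
  obtain ⟨g, hg⟩ := exists_extension_of_monotone _ relSkeleton_mono (relSkeleton_subset hLM)
    (fun σ hσ => ⟨σ.card, Or.inr ⟨hσ, le_rfl⟩⟩) F fun n => hext n (F n)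
  exact ⟨g, fun x => hg 0 (inclusionMap subset_union_left x)⟩

end Skeleton

section Gluing

variable {V Y : Type*} [TopologicalSpace Y] {K P : Set (Finset V)} {U : Set V}

theorem isComplex_fullComplex (U : Set V) : IsComplex (fullComplex U) :=
  ⟨fun _ hs => hs.1, fun _ hσ _ hτσ hτ =>
    ⟨hτ, (Finset.coe_subset.2 hτσ).trans hσ.2⟩⟩

theorem IsComplex.inter (hK : IsComplex K) (hP : IsComplex P) : IsComplex (K ∩ P) :=
  ⟨fun σ hσ => hK.1 σ hσ.1, fun σ hσ τ hτσ hτ =>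
    ⟨hK.2 σ hσ.1 τ hτσ hτ, hP.2 σ hσ.2 τ hτσ hτ⟩⟩

theorem realizationSet_union (K P : Set (Finset V)) :
    realizationSet (K ∪ P) = realizationSet K ∪ realizationSet P := by
  ext x
  simp only [realizationSet, mem_union, mem_ofPred_eq, or_and_right, exists_or]

theorem realizationSet_inter (hK : IsComplex K) (hP : IsComplex P) :
    realizationSet (K ∩ P) = realizationSet K ∩ realizationSet P := by
  classical
  refine (subset_inter (realization_mono inter_subset_left)
    (realization_mono inter_subset_right)).antisymm ?_
  rintro x ⟨⟨σ, hσ, hxσ⟩, τ, hτ, hxτ⟩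
  have hx := mem_simplexSet_inter hxσ hxτ
  exact ⟨σ ∩ τ, ⟨hK.2 σ hσ _ Finset.inter_subset_left (.of_mem_simplexSet hx),
    hP.2 τ hτ _ Finset.inter_subset_right (.of_mem_simplexSet hx)⟩, hx⟩

theorem convex_realizationSet_fullComplex (U : Set V) :
    Convex ℝ (realizationSet (fullComplex U)) := by
  classical
  rintro x ⟨σ, hσ, hx⟩ y ⟨τ, hτ, hy⟩ a b ha hb hab
  refine ⟨σ ∪ τ, ⟨hσ.1.mono Finset.subset_union_left, ?_⟩,
    convex_simplexSet _ (simplexSet_mono Finset.subset_union_left hx)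
      (simplexSet_mono Finset.subset_union_right hy) ha hb hab⟩
  rw [Finset.coe_union]
  exact union_subset hσ.2 hτ.2

theorem segment_mem_realizationSet_fullComplex {x y : V → ℝ}
    (hx : x ∈ realizationSet (fullComplex U)) (hy : y ∈ realizationSet (fullComplex U))
    (t : unitInterval) :
    (1 - t : ℝ) • x + (t : ℝ) • y ∈ realizationSet (fullComplex U) :=
  convex_realizationSet_fullComplex U hx hy (sub_nonneg.2 t.2.2) t.2.1 (sub_add_cancel 1 _)

theorem continuous_segment_fullComplex_prod_simplex {σ : Finset V} (hσ : σ ∈ fullComplex U) :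
    Continuous fun p : Realization (fullComplex U) × (simplexSet σ × unitInterval) =>
      mk (M := fullComplex U) ((1 - p.2.2 : ℝ) • p.1.1 + (p.2.2 : ℝ) • p.2.1.1)
        (segment_mem_realizationSet_fullComplex p.1.2 ⟨σ, hσ, p.2.1.2⟩ p.2.2) := by
  classical
  refine continuous_prod_of_forall_simplex fun τ hτ => ?_
  have hτσ : τ ∪ σ ∈ fullComplex U := by
    refine ⟨hτ.1.mono Finset.subset_union_left, ?_⟩
    rw [Finset.coe_union]
    exact union_subset hτ.2 hσ.2
  have hmem : ∀ q : simplexSet τ × (simplexSet σ × unitInterval),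
      (1 - q.2.2 : ℝ) • q.1.1 + (q.2.2 : ℝ) • q.2.1.1 ∈ simplexSet (τ ∪ σ) := fun q =>
    convex_simplexSet _ (simplexSet_mono Finset.subset_union_left q.1.2)
      (simplexSet_mono Finset.subset_union_right q.2.1.2) (sub_nonneg.2 q.2.2.2.2) q.2.2.2.1
      (sub_add_cancel 1 _)
  exact (continuous_ofSimplex _ hτσ).comp (Continuous.subtype_mk (by fun_prop) hmem)

theorem continuous_segment_fullComplex
    (g : C(Realization (fullComplex U), Realization (fullComplex U))) :
    Continuous fun p : Realization (fullComplex U) × unitInterval =>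
      mk (M := fullComplex U) ((1 - p.2 : ℝ) • (g p.1).1 + (p.2 : ℝ) • p.1.1)
        (segment_mem_realizationSet_fullComplex (g p.1).2 p.1.2 p.2) :=
  continuous_prod_of_forall_simplex fun σ hσ =>
    (continuous_segment_fullComplex_prod_simplex hσ).comp
      (((g.continuous.comp (continuous_ofSimplex σ hσ)).comp continuous_fst).prodMk
        continuous_id)

theorem exists_continuousMap_prod_union {Z : Type*} [TopologicalSpace Z]
    [LocallyCompactSpace Z]
    (f : C(Realization K × Z, Y)) (g : C(Realization P × Z, Y))
    (hfg : ∀ x (hK : x ∈ realizationSet K) (hP : x ∈ realizationSet P) z,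
      f (mk x hK, z) = g (mk x hP, z)) :
    ∃ h : C(Realization (K ∪ P) × Z, Y),
      (∀ x (hx : x.1 ∈ realizationSet K) z, h (x, z) = f (mk x.1 hx, z)) ∧
      ∀ x (hx : x.1 ∈ realizationSet P) z, h (x, z) = g (mk x.1 hx, z) := by
  classical
  have hKP : ∀ x : Realization (K ∪ P), x.1 ∉ realizationSet K → x.1 ∈ realizationSet P :=
    fun x => ((realizationSet_union K P).subset x.2).resolve_left
  let h : Realization (K ∪ P) × Z → Y := fun p =>
    if hp : p.1.1 ∈ realizationSet K then f (mk p.1.1 hp, p.2)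
    else g (mk p.1.1 (hKP p.1 hp), p.2)
  have hhK : ∀ x (hx : x.1 ∈ realizationSet K) z, h (x, z) = f (mk x.1 hx, z) :=
    fun x hx z => dif_pos hx
  have hhP : ∀ x (hx : x.1 ∈ realizationSet P) z, h (x, z) = g (mk x.1 hx, z) := by
    intro x hx z
    by_cases hxK : x.1 ∈ realizationSet K
    · exact (hhK x hxK z).trans (hfg _ hxK hx z)
    · exact dif_neg hxK
  refine ⟨⟨h, continuous_prod_of_forall_simplex fun σ hσ => ?_⟩, hhK, hhP⟩
  rcases hσ with hσ | hσ
  · exact (f.continuous.comp ((continuous_ofSimplex σ hσ).prodMap continuous_id)).congr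
      fun q => (hhK (ofSimplex σ (Or.inl hσ) q.1) ⟨σ, hσ, q.1.2⟩ q.2).symm
  · exact (g.continuous.comp ((continuous_ofSimplex σ hσ).prodMap continuous_id)).congr
      fun q => (hhP (ofSimplex σ (Or.inr hσ) q.1) ⟨σ, hσ, q.1.2⟩ q.2).symm

theorem exists_continuousMap_union (f : C(Realization K, Y)) (g : C(Realization P, Y))
    (hfg : ∀ x (hK : x ∈ realizationSet K) (hP : x ∈ realizationSet P),
      f (mk x hK) = g (mk x hP)) :
    ∃ h : C(Realization (K ∪ P), Y),
      (∀ x (hx : x.1 ∈ realizationSet K), h x = f (mk x.1 hx)) ∧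
      ∀ x (hx : x.1 ∈ realizationSet P), h x = g (mk x.1 hx) := by
  obtain ⟨h, hK, hP⟩ := exists_continuousMap_prod_union (Z := Unit)
    (f.comp ContinuousMap.fst) (g.comp ContinuousMap.fst) fun x hK hP _ => hfg x hK hP
  exact ⟨h.comp ((ContinuousMap.id _).prodMk (ContinuousMap.const _ ())),
    fun x hx => hK x hx (), fun x hx => hP x hx ()⟩

theorem exists_retraction_union_fullComplex (hK : IsComplex K)
    (r : C(Realization (fullComplex U), Realization (K ∩ fullComplex U)))
    (hr : ∀ x, r (inclusionMap inter_subset_right x) = x) :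
    ∃ G : C(Realization (K ∪ fullComplex U), Realization K),
      G.comp (inclusionMap subset_union_left) = ContinuousMap.id _ ∧
      ((inclusionMap subset_union_left).comp G).Homotopic (ContinuousMap.id _) := by
  have hrK : ∀ x (hxK : x ∈ realizationSet K) (hxU : x ∈ realizationSet (fullComplex U)),
      (r (mk x hxU)).1 = x := fun x hxK hxU =>
    congrArg Subtype.val (hr (mk x ((realizationSet_inter hK (isComplex_fullComplex U)).symm ▸
      ⟨hxK, hxU⟩)))
  obtain ⟨G, hGK, hGU⟩ := exists_continuousMap_union (ContinuousMap.id (Realization K))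
    ((inclusionMap inter_subset_left).comp r) fun x hxK hxU => Subtype.ext (hrK x hxK hxU).symm
  let S : C(Realization (fullComplex U) × unitInterval, Realization (K ∪ fullComplex U)) :=
    (inclusionMap subset_union_right).comp
      ⟨_, continuous_segment_fullComplex ((inclusionMap inter_subset_right).comp r)⟩
  obtain ⟨F, hFK, hFU⟩ := exists_continuousMap_prod_union
    ((inclusionMap subset_union_left).comp ContinuousMap.fst) S fun x hxK hxU t => by
      apply Subtype.ext
      simp [S, hrK x hxK hxU, ← add_smul]
  refine ⟨G, ContinuousMap.ext fun x => hGK (inclusionMap _ x) x.2,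
    ⟨{ toFun := fun p => F (p.2, p.1)
       map_zero_left := fun x => ?_
       map_one_left := fun x => ?_ }⟩⟩
  · show F (x, 0) = _
    apply Subtype.ext
    rcases (realizationSet_union _ _).subset x.2 with hx | hx
    · simp [hFK x hx, hGK x hx]
    · simp [hFU x hx, hGU x hx, S]
  · show F (x, 1) = x
    apply Subtype.ext
    rcases (realizationSet_union _ _).subset x.2 with hx | hx
    · simp [hFK x hx]
    · simp [hFU x hx, S]

end Gluing

end

theorem gluing_lemma_general {V : Type*} {K : Set (Finset V)} (hK : IsComplex K)
    (U : Set V)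
    (hcontr : ContractibleSpace (Realization (K ∩ fullComplex U))) :
    ∃ G : C(Realization (K ∪ fullComplex U), Realization K),
      (G.comp (inclusionMap Set.subset_union_left)).Homotopic (ContinuousMap.id _) ∧
      ((inclusionMap (Set.subset_union_left : K ⊆ K ∪ fullComplex U)).comp G).Homotopic
        (ContinuousMap.id _) := by
  obtain ⟨r, hr⟩ := exists_extension_of_contractible (hK.inter (isComplex_fullComplex U))
    (isComplex_fullComplex U) Set.inter_subset_right (ContinuousMap.id _)
  obtain ⟨G, hG, hGh⟩ := exists_retraction_union_fullComplex hK r hr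
  exact ⟨G, hG ▸ ContinuousMap.Homotopic.refl _, hGh⟩

/-- **The Gluing Lemma.** If `U` is a set of vertices of a simplicial complex `Σ` such that
`|Σ ∩ pow(U)|` is contractible, then the inclusion `|Σ| ↪ |Σ ∪ pow(U)|` is a homotopy
equivalence. -/
theorem gluing_lemma {V : Type*} {K : Set (Finset V)} (hK : IsComplex K)
    (U : Set V) (hU : U ⊆ vertexSet K)
    (hcontr : ContractibleSpace (Realization (K ∩ fullComplex U))) :
    ∃ G : C(Realization (K ∪ fullComplex U), Realization K),
      (G.comp (inclusionMap Set.subset_union_left)).Homotopic (ContinuousMap.id _) ∧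
      ((inclusionMap (Set.subset_union_left : K ⊆ K ∪ fullComplex U)).comp G).Homotopic
        (ContinuousMap.id _) :=
  gluing_lemma_general hK U hcontr
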